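/- arXiv:2106.05962 — 4 statements merged into one kernel-verified Lean document; each statement's English description precedes it below -/
import Mathlib

section
/- Let f : ℝ → ℝ be continuous with f(t) = 0 for all t ≤ 0, and assume that for every α > 4π one has f(t²)·t·e^{−α t²} → 0 as t → +∞. Define F(t) := ∫₀ᵗ f(s) ds. Then for every q > 2, every ζ > 0 and every α > 4π there exists a constant C > 0 (depending on q, α, ζ) such that F(t) ≤ ζ·t + C·t^{q/2}·(e^{α t} − 1) for all t ≥ 0. -/
open Real Filter

/-- Growth estimate (2.9): if `f` is continuous, vanishes on `(-∞,0]` and satisfies the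
vanishing half of the planar exponential critical growth condition, then its primitive
`F t = ∫ s in 0..t, f s` satisfies, for every `q > 2`, `ζ > 0` and `α > 4π`,
`F t ≤ ζ t + C * t^(q/2) * (exp (α t) - 1)` for all `t ≥ 0`, for some `C > 0`. -/
theorem stmt_1
    (f : ℝ → ℝ) (hf_cont : Continuous f)
    (hf_zero : ∀ t : ℝ, t ≤ 0 → f t = 0)
    (hf_crit : ∀ α : ℝ, 4 * π < α →
      Tendsto (fun t : ℝ => f (t ^ 2) * t * Real.exp (-α * t ^ 2)) atTop (nhds 0))
    (F : ℝ → ℝ) (hF : ∀ t : ℝ, F t = ∫ s in (0:ℝ)..t, f s) :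
    ∀ q : ℝ, 2 < q → ∀ ζ : ℝ, 0 < ζ → ∀ α : ℝ, 4 * π < α →
      ∃ C : ℝ, 0 < C ∧ ∀ t : ℝ, 0 ≤ t →
        F t ≤ ζ * t + C * t ^ (q / 2) * (Real.exp (α * t) - 1) := by
  intro q hq ζ hζ α hα
  have hπ : (0:ℝ) < 4 * π := by positivity
  have hα0 : (0:ℝ) < α := hπ.trans hα
  -- small δ : |f| ≤ ζ on [0, δ)
  have hf0 : f 0 = 0 := hf_zero 0 le_rfl
  obtain ⟨δ, hδ0, hδ⟩ := Metric.continuousAt_iff.mp (hf_cont.continuousAt (x := (0:ℝ))) ζ hζ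
  -- global exponential bound
  obtain ⟨N, hN⟩ := (Metric.tendsto_atTop.mp (hf_crit α hα)) 1 one_pos
  set T : ℝ := max N 1 with hT
  have hT1 : (1:ℝ) ≤ T := le_max_right _ _
  have hT0 : (0:ℝ) ≤ T := by linarith
  obtain ⟨M, hM⟩ := (isCompact_Icc (a := (0:ℝ)) (b := T^2)).exists_bound_of_continuousOn
    hf_cont.continuousOn
  set C₁ : ℝ := max M 0 + 1 with hC₁
  have hC₁1 : (1:ℝ) ≤ C₁ := by
    have : (0:ℝ) ≤ max M 0 := le_max_right _ _
    linarith
  have hC₁0 : (0:ℝ) < C₁ := by linarith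
  have hbound : ∀ s : ℝ, 0 ≤ s → f s ≤ C₁ * Real.exp (α * s) := by
    intro s hs
    have hexp1 : (1:ℝ) ≤ Real.exp (α * s) := by
      rw [← Real.exp_zero]; exact Real.exp_le_exp.mpr (by positivity)
    rcases le_or_gt s (T^2) with h | h
    · have := hM s ⟨hs, h⟩
      have hfs : f s ≤ max M 0 := le_trans (le_abs_self _) (le_trans this (le_max_left _ _))
      calc f s ≤ max M 0 + 1 := by linarith
        _ = C₁ * 1 := by rw [hC₁, mul_one]
        _ ≤ C₁ * Real.exp (α * s) := by
          exact mul_le_mul_of_nonneg_left hexp1 (le_of_lt hC₁0)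
    · -- s > T², use t = √s
      set t := Real.sqrt s with ht
      have ht2 : t ^ 2 = s := Real.sq_sqrt hs
      have htT : T ≤ t := by
        have := Real.sqrt_le_sqrt (le_of_lt h)
        rwa [Real.sqrt_sq hT0] at this
      have htN : N ≤ t := le_trans (le_max_left _ _) htT
      have ht1 : (1:ℝ) ≤ t := le_trans hT1 htT
      have := hN t htN
      rw [Real.dist_eq, sub_zero] at this
      have habs : |f (t ^ 2) * t * Real.exp (-α * t ^ 2)| < 1 := this
      rw [abs_mul, abs_mul, Real.abs_exp, abs_of_nonneg (by linarith : (0:ℝ) ≤ t)] at habs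
      have hfle : |f (t ^ 2)| * t < Real.exp (α * t ^ 2) := by
        have hexp : Real.exp (-α * t ^ 2) = (Real.exp (α * t ^ 2))⁻¹ := by
          rw [← Real.exp_neg]; ring_nf
        rw [hexp] at habs
        have hpos : (0:ℝ) < Real.exp (α * t ^ 2) := Real.exp_pos _
        calc |f (t ^ 2)| * t = |f (t ^ 2)| * t * (Real.exp (α * t ^ 2))⁻¹ * Real.exp (α * t ^ 2) := by
              field_simp
          _ < 1 * Real.exp (α * t ^ 2) := by
              exact mul_lt_mul_of_pos_right habs hpos
          _ = Real.exp (α * t ^ 2) := one_mul _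
      have : |f s| ≤ Real.exp (α * s) := by
        rw [← ht2]
        nlinarith [abs_nonneg (f (t ^ 2)), Real.exp_pos (α * t ^ 2)]
      calc f s ≤ |f s| := le_abs_self _
        _ ≤ Real.exp (α * s) := this
        _ = 1 * Real.exp (α * s) := (one_mul _).symm
        _ ≤ C₁ * Real.exp (α * s) :=
            mul_le_mul_of_nonneg_right hC₁1 (le_of_lt (Real.exp_pos _))
  -- integral bound : F t ≤ C₁/α * (exp (α t) - 1)
  have hFexp : ∀ t : ℝ, 0 ≤ t → F t ≤ C₁ / α * (Real.exp (α * t) - 1) := by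
    intro t ht
    rw [hF]
    have hg : Continuous fun s : ℝ => C₁ * Real.exp (α * s) := by continuity
    have hmono : (∫ s in (0:ℝ)..t, f s) ≤ ∫ s in (0:ℝ)..t, C₁ * Real.exp (α * s) := by
      apply intervalIntegral.integral_mono_on ht
        (hf_cont.intervalIntegrable _ _) (hg.intervalIntegrable _ _)
      intro s hs
      exact hbound s hs.1
    have hcalc : (∫ s in (0:ℝ)..t, C₁ * Real.exp (α * s)) = C₁ / α * (Real.exp (α * t) - 1) := by
      rw [intervalIntegral.integral_const_mul]
      have : (∫ s in (0:ℝ)..t, Real.exp (α * s)) = α⁻¹ • ∫ x in (α*0)..(α*t), Real.exp x :=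
        intervalIntegral.integral_comp_mul_left Real.exp (ne_of_gt hα0)
      rw [this, integral_exp, mul_zero, Real.exp_zero]
      rw [smul_eq_mul]
      field_simp
    linarith [hmono, hcalc ▸ hmono]
  -- the constant
  refine ⟨C₁ / α / δ ^ (q / 2), by positivity, ?_⟩
  intro t ht
  have hq2 : (0:ℝ) ≤ q / 2 := by linarith
  have hexp1 : (1:ℝ) ≤ Real.exp (α * t) := by
    rw [← Real.exp_zero]; exact Real.exp_le_exp.mpr (by positivity)
  rcases lt_or_ge t δ with hcase | hcase
  · -- small t : F t ≤ ζ t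
    have hsmall : F t ≤ ζ * t := by
      rw [hF]
      have hb : ∀ s ∈ Set.uIoc (0:ℝ) t, ‖f s‖ ≤ ζ := by
        intro s hs
        rw [Set.uIoc_of_le ht] at hs
        have hsd : dist s 0 < δ := by
          rw [Real.dist_eq, sub_zero, abs_of_pos hs.1]
          exact lt_of_le_of_lt hs.2 hcase
        have := hδ hsd
        rw [hf0, Real.dist_eq, sub_zero] at this
        exact le_of_lt this
      have := intervalIntegral.norm_integral_le_of_norm_le_const hb
      rw [sub_zero, abs_of_nonneg ht] at this
      exact le_trans (le_abs_self _) this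
    have hrest : 0 ≤ C₁ / α / δ ^ (q / 2) * t ^ (q / 2) * (Real.exp (α * t) - 1) := by
      have h1 : (0:ℝ) ≤ t ^ (q / 2) := Real.rpow_nonneg ht _
      have h2 : (0:ℝ) ≤ Real.exp (α * t) - 1 := by linarith
      positivity
    linarith
  · -- large t : F t ≤ C t^{q/2} (exp - 1)
    have hδt : δ ^ (q / 2) ≤ t ^ (q / 2) := Real.rpow_le_rpow (le_of_lt hδ0) hcase hq2
    have hδp : (0:ℝ) < δ ^ (q / 2) := Real.rpow_pos_of_pos hδ0 _
    have key : C₁ / α * (Real.exp (α * t) - 1) ≤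
        C₁ / α / δ ^ (q / 2) * t ^ (q / 2) * (Real.exp (α * t) - 1) := by
      have h2 : (0:ℝ) ≤ Real.exp (α * t) - 1 := by linarith
      have : C₁ / α ≤ C₁ / α / δ ^ (q / 2) * t ^ (q / 2) := by
        rw [div_mul_eq_mul_div, le_div_iff₀ hδp]
        have hCα : (0:ℝ) ≤ C₁ / α := by positivity
        calc C₁ / α * δ ^ (q / 2) ≤ C₁ / α * t ^ (q / 2) :=
              mul_le_mul_of_nonneg_left hδt hCα
          _ = C₁ / α * t ^ (q / 2) := rfl
      exact mul_le_mul_of_nonneg_right this h2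
    have := hFexp t ht
    have hζt : 0 ≤ ζ * t := by positivity
    linarith
end

section
/- Let (g_n) be a sequence of nonnegative measurable functions on ℝ², integrable on every ball, and let g : ℝ² → ℝ be a nonnegative Lebesgue-integrable function such that for every j ∈ ℕ, ∫_{B_j(0)} g_n dx → ∫_{B_j(0)} g dx as n → ∞, where B_j(0) is the open ball of radius j centered at the origin. Then there exists a strictly increasing sequence of indices (n_j) such that for every σ > 0 there is r₀ > 0 with the property that for every r ≥ r₀, limsup_{j→∞} ∫_{B_j(0) \ B_r(0)} g_{n_j} dx ≤ σ. -/
open Real MeasureTheory Filter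

/-- Lemma 2.5 (diagonal subsequence with uniformly small tails over annuli): if the
nonnegative functions `gn n`, integrable on every ball, satisfy
`∫_{B_j(0)} gn n → ∫_{B_j(0)} g` for every `j`, with `g` nonnegative and integrable,
then there is a strictly increasing sequence of indices `φ` such that for every `σ > 0`
there is `r₀ > 0` with
`limsup_j ∫_{B_j(0) \ B_r(0)} gn (φ j) ≤ σ` for every `r ≥ r₀`. -/
theorem stmt_8
    (gn : ℕ → EuclideanSpace ℝ (Fin 2) → ℝ) (g : EuclideanSpace ℝ (Fin 2) → ℝ)
    (hgn_meas : ∀ n, Measurable (gn n))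
    (hgn_nonneg : ∀ n x, 0 ≤ gn n x)
    (hgn_int : ∀ n, ∀ r : ℝ, IntegrableOn (gn n) (Metric.ball 0 r))
    (hg_nonneg : ∀ x, 0 ≤ g x)
    (hg_int : Integrable g)
    (hconv : ∀ j : ℕ,
      Tendsto (fun n => ∫ x in Metric.ball (0 : EuclideanSpace ℝ (Fin 2)) (j : ℝ), gn n x)
        atTop (nhds (∫ x in Metric.ball (0 : EuclideanSpace ℝ (Fin 2)) (j : ℝ), g x))) :
    ∃ φ : ℕ → ℕ, StrictMono φ ∧
      ∀ σ : ℝ, 0 < σ → ∃ r₀ : ℝ, 0 < r₀ ∧ ∀ r : ℝ, r₀ ≤ r →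
        Filter.limsup
          (fun j : ℕ =>
            ∫ x in Metric.ball (0 : EuclideanSpace ℝ (Fin 2)) (j : ℝ) \
              Metric.ball (0 : EuclideanSpace ℝ (Fin 2)) r, gn (φ j) x)
          atTop ≤ σ := by
  classical
  have hP : ∀ j : ℕ, ∀ᶠ n in atTop, ∀ m : ℕ, m ≤ j →
      |(∫ x in Metric.ball (0 : EuclideanSpace ℝ (Fin 2)) (m : ℝ), gn n x)
        - ∫ x in Metric.ball (0 : EuclideanSpace ℝ (Fin 2)) (m : ℝ), g x|
        ≤ 1 / ((j : ℝ) + 1) := by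
    intro j
    have hpos : (0 : ℝ) < 1 / ((j : ℝ) + 1) := by positivity
    have h : ∀ᶠ n in atTop, ∀ m ∈ Finset.range (j + 1),
        |(∫ x in Metric.ball (0 : EuclideanSpace ℝ (Fin 2)) (m : ℝ), gn n x)
          - ∫ x in Metric.ball (0 : EuclideanSpace ℝ (Fin 2)) (m : ℝ), g x|
          ≤ 1 / ((j : ℝ) + 1) := by
      rw [eventually_all_finset]
      intro m _
      have h2 := (hconv m) (Metric.ball_mem_nhds _ hpos)
      filter_upwards [h2] with n hn
      rw [Set.mem_preimage, Metric.mem_ball, Real.dist_eq] at hn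
      exact hn.le
    filter_upwards [h] with n hn m hm
    exact hn m (Finset.mem_range.mpr (Nat.lt_succ_of_le hm))
  obtain ⟨φ, hφmono, hφ⟩ := Filter.extraction_forall_of_eventually hP
  refine ⟨φ, hφmono, ?_⟩
  intro σ hσ
  -- tail of g
  have htail : Tendsto
      (fun m : ℕ => ∫ x in Metric.ball (0 : EuclideanSpace ℝ (Fin 2)) (m : ℝ), g x) atTop
      (nhds (∫ x, g x)) := by
    have h := tendsto_setIntegral_of_monotone
      (μ := (volume : Measure (EuclideanSpace ℝ (Fin 2)))) (f := g)
      (s := fun m : ℕ => Metric.ball (0 : EuclideanSpace ℝ (Fin 2)) (m : ℝ))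
      (fun m => measurableSet_ball)
      (fun a b hab => Metric.ball_subset_ball (by exact_mod_cast hab))
      (by rw [Metric.iUnion_ball_nat]; exact hg_int.integrableOn)
    rwa [Metric.iUnion_ball_nat, setIntegral_univ] at h
  have hle : ∀ᶠ n : ℕ in atTop,
      (∫ x, g x) - σ / 2
        < ∫ x in Metric.ball (0 : EuclideanSpace ℝ (Fin 2)) (n : ℝ), g x :=
    htail.eventually (eventually_gt_nhds (by linarith))
  obtain ⟨N, hN⟩ := hle.exists_forall_of_atTop
  refine ⟨(N : ℝ) + 1, by positivity, ?_⟩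
  intro r hr
  have hr0 : (0 : ℝ) ≤ r := le_trans (by positivity) hr
  set m := ⌊r⌋₊ with hm_def
  have hmN : N ≤ m := Nat.le_floor (by linarith)
  have hmr : (m : ℝ) ≤ r := Nat.floor_le hr0
  have hnonneg : ∀ j : ℕ,
      0 ≤ ∫ x in Metric.ball (0 : EuclideanSpace ℝ (Fin 2)) (j : ℝ) \
          Metric.ball (0 : EuclideanSpace ℝ (Fin 2)) r, gn (φ j) x :=
    fun j => setIntegral_nonneg
      (measurableSet_ball.diff measurableSet_ball)
      (fun x _ => hgn_nonneg (φ j) x)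
  refine Filter.limsup_le_of_le ?_ ?_
  · exact Filter.isCoboundedUnder_le_of_le atTop (fun j => hnonneg j)
  · filter_upwards [eventually_ge_atTop (⌈r⌉₊), eventually_ge_atTop m,
      eventually_ge_atTop (⌈4 / σ⌉₊)] with j hjr hjm hjσ
    have h2j : 2 / ((j : ℝ) + 1) ≤ σ / 2 := by
      have h4 : 4 / σ ≤ (j : ℝ) := le_trans (Nat.le_ceil _) (by exact_mod_cast hjσ)
      rw [div_le_div_iff₀ (by positivity) (by linarith)]
      have h5 : σ * (4 / σ) ≤ σ * (j : ℝ) := mul_le_mul_of_nonneg_left h4 hσ.le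
      rw [mul_div_cancel₀ _ (ne_of_gt hσ)] at h5
      nlinarith
    have hrj : r ≤ (j : ℝ) := le_trans (Nat.le_ceil r) (by exact_mod_cast hjr)
    have hsub : Metric.ball (0 : EuclideanSpace ℝ (Fin 2)) r
        ⊆ Metric.ball (0 : EuclideanSpace ℝ (Fin 2)) (j : ℝ) :=
      Metric.ball_subset_ball hrj
    rw [integral_diff measurableSet_ball (hgn_int _ _) hsub]
    have hj1 := (abs_le.mp (hφ j j le_rfl)).2
    have hj2 := (abs_le.mp (hφ j m hjm)).1
    have h1j : 1 / ((j : ℝ) + 1) + 1 / ((j : ℝ) + 1) = 2 / ((j : ℝ) + 1) := by ring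
    have hmono : (∫ x in Metric.ball (0 : EuclideanSpace ℝ (Fin 2)) (m : ℝ), gn (φ j) x)
        ≤ ∫ x in Metric.ball (0 : EuclideanSpace ℝ (Fin 2)) r, gn (φ j) x :=
      setIntegral_mono_set (hgn_int _ _)
        (Filter.Eventually.of_forall fun x => hgn_nonneg _ x)
        ((Metric.ball_subset_ball hmr).eventuallyLE)
    have hgj : (∫ x in Metric.ball (0 : EuclideanSpace ℝ (Fin 2)) (j : ℝ), g x)
        ≤ ∫ x, g x :=
      setIntegral_le_integral hg_int (Filter.Eventually.of_forall fun x => hg_nonneg x)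
    have hNm := hN m hmN
    linarith
end

section
/- Let V : ℝ² → ℝ be continuous, V₀ ∈ ℝ, and let M ⊆ ℝ² be a nonempty compact set with V(y) = V₀ for every y ∈ M. Let ω : ℝ² → ℝ be measurable with ω² Lebesgue-integrable, let δ > 0, and let η : ℝ → [0,1] be Borel measurable with η(t) = 0 for all t ≥ δ. Then sup_{y ∈ M} ∫_{ℝ²} |V(εz + y) − V₀| · η(ε‖z‖)² · ω(z)² dz → 0 as ε → 0⁺. -/
open Real MeasureTheory Filter

local notation "E" => EuclideanSpace ℝ (Fin 2)

/-- The electric-potential convergence claim of Lemma 5.2: if `V` is continuous and equals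
`V₀` on the nonempty compact set `M`, `ω²` is integrable, and `η : ℝ → [0,1]` vanishes on
`[δ,∞)`, then `sup_{y ∈ M} ∫ |V(εz+y) − V₀| η(ε‖z‖)² ω(z)² dz → 0` as `ε → 0⁺`. -/
theorem stmt_10
    (V : EuclideanSpace ℝ (Fin 2) → ℝ) (hV : Continuous V) (V₀ : ℝ)
    (M : Set (EuclideanSpace ℝ (Fin 2))) (hM_ne : M.Nonempty) (hM_cpt : IsCompact M)
    (hVM : ∀ y ∈ M, V y = V₀)
    (ω : EuclideanSpace ℝ (Fin 2) → ℝ) (hω_meas : Measurable ω)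
    (hω_int : Integrable (fun x => (ω x) ^ 2))
    (δ : ℝ) (hδ : 0 < δ)
    (η : ℝ → ℝ) (hη_meas : Measurable η)
    (hη_range : ∀ t, η t ∈ Set.Icc (0 : ℝ) 1)
    (hη_zero : ∀ t : ℝ, δ ≤ t → η t = 0) :
    Tendsto
      (fun ε : ℝ =>
        ⨆ y : M, ∫ z, |V (ε • z + (y : EuclideanSpace ℝ (Fin 2))) - V₀| *
          (η (ε * ‖z‖)) ^ 2 * (ω z) ^ 2)
      (nhdsWithin 0 (Set.Ioi 0)) (nhds 0) := by
  haveI : Nonempty M := hM_ne.to_subtype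
  set K := Metric.cthickening δ M with hK_def
  have hK_cpt : IsCompact K := hM_cpt.cthickening
  have hMK : M ⊆ K := Metric.self_subset_cthickening M
  obtain ⟨C, hC⟩ := hK_cpt.exists_bound_of_continuousOn
    ((hV.sub continuous_const).continuousOn)
  have hC0 : 0 ≤ C := by
    obtain ⟨y₀, hy₀⟩ := hM_ne
    exact le_trans (norm_nonneg _) (hC y₀ (hMK hy₀))
  -- measurability
  have hmeas : ∀ (ε : ℝ) (y : E), Measurable fun z : E =>
      |V (ε • z + y) - V₀| * (η (ε * ‖z‖)) ^ 2 * (ω z) ^ 2 := by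
    intro ε y
    have h1 : Measurable fun z : E => ε • z + y :=
      ((measurable_id.const_smul ε).add_const y)
    exact (((hV.measurable.comp h1).sub measurable_const).abs.mul
      ((hη_meas.comp (measurable_norm.const_mul ε)).pow_const 2)).mul (hω_meas.pow_const 2)
  -- pointwise nonnegativity
  have hnonneg : ∀ (ε : ℝ) (y : E) (z : E),
      0 ≤ |V (ε • z + y) - V₀| * (η (ε * ‖z‖)) ^ 2 * (ω z) ^ 2 := by
    intro ε y z
    positivity
  -- pointwise bound by C * ω²
  have hbd : ∀ (ε : ℝ), 0 < ε → ∀ y ∈ M, ∀ z : E,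
      |V (ε • z + y) - V₀| * (η (ε * ‖z‖)) ^ 2 * (ω z) ^ 2 ≤ C * (ω z) ^ 2 := by
    intro ε hε y hy z
    by_cases hηz : η (ε * ‖z‖) = 0
    · rw [hηz]
      have : 0 ≤ C * (ω z) ^ 2 := by positivity
      simpa using this
    · have hlt : ε * ‖z‖ < δ := by
        by_contra h
        exact hηz (hη_zero _ (le_of_not_gt h))
      have hmem : ε • z + y ∈ K := by
        apply Metric.mem_cthickening_of_dist_le _ y δ M hy
        have : dist (ε • z + y) y = ε * ‖z‖ := by
          rw [dist_eq_norm]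
          simp [norm_smul, abs_of_pos hε]
        rw [this]
        exact hlt.le
      have hVb : |V (ε • z + y) - V₀| ≤ C := hC _ hmem
      have hη2 : (η (ε * ‖z‖)) ^ 2 ≤ 1 := by
        have h := hη_range (ε * ‖z‖)
        nlinarith [h.1, h.2]
      have hη2' : 0 ≤ (η (ε * ‖z‖)) ^ 2 := sq_nonneg _
      have hω2 : 0 ≤ (ω z) ^ 2 := sq_nonneg _
      have habs : 0 ≤ |V (ε • z + y) - V₀| := abs_nonneg _
      have h12 : |V (ε • z + y) - V₀| * (η (ε * ‖z‖)) ^ 2 ≤ C * 1 :=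
        mul_le_mul hVb hη2 hη2' hC0
      calc |V (ε • z + y) - V₀| * (η (ε * ‖z‖)) ^ 2 * (ω z) ^ 2
          ≤ C * 1 * (ω z) ^ 2 := mul_le_mul_of_nonneg_right h12 hω2
        _ = C * (ω z) ^ 2 := by ring
  -- integrability
  have hint : ∀ (ε : ℝ), 0 < ε → ∀ y ∈ M,
      Integrable fun z : E => |V (ε • z + y) - V₀| * (η (ε * ‖z‖)) ^ 2 * (ω z) ^ 2 := by
    intro ε hε y hy
    refine (hω_int.const_mul C).mono' ((hmeas ε y).aestronglyMeasurable) ?_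
    filter_upwards with z
    rw [Real.norm_eq_abs, abs_of_nonneg (hnonneg ε y z)]
    exact hbd ε hε y hy z
  -- tail estimate
  have htail : ∀ κ : ℝ, 0 < κ → ∃ R : ℕ,
      ∫ z in (Metric.closedBall (0 : E) R)ᶜ, (ω z) ^ 2 < κ := by
    intro κ hκ
    have hmono : Monotone fun n : ℕ => Metric.closedBall (0 : E) n := by
      intro n m h
      exact Metric.closedBall_subset_closedBall (by exact_mod_cast h)
    have hunion : (⋃ n : ℕ, Metric.closedBall (0 : E) n) = Set.univ :=
      Metric.iUnion_closedBall_nat 0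
    have htend := tendsto_setIntegral_of_monotone
      (fun n : ℕ => (Metric.isClosed_closedBall.measurableSet :
        MeasurableSet (Metric.closedBall (0 : E) n))) hmono
      (by rw [hunion]; exact hω_int.integrableOn)
    rw [hunion, setIntegral_univ] at htend
    have htend' : Tendsto (fun n : ℕ => ∫ z in (Metric.closedBall (0 : E) n)ᶜ, (ω z) ^ 2)
        atTop (nhds 0) := by
      have heq : ∀ n : ℕ, ∫ z in (Metric.closedBall (0 : E) n)ᶜ, (ω z) ^ 2 =
          (∫ z, (ω z) ^ 2) - ∫ z in Metric.closedBall (0 : E) n, (ω z) ^ 2 := by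
        intro n
        have := integral_add_compl
          (Metric.isClosed_closedBall.measurableSet :
            MeasurableSet (Metric.closedBall (0 : E) n)) hω_int
        linarith
      simp only [heq]
      have h0 := (tendsto_const_nhds (x := ∫ z, (ω z) ^ 2)).sub htend
      rw [sub_self] at h0
      exact h0
    exact ((tendsto_order.1 htend').2 κ hκ).exists
  -- uniform continuity on K
  have hUC := Metric.uniformContinuousOn_iff.mp
    (hK_cpt.uniformContinuousOn_of_continuous hV.continuousOn)
  rw [Metric.tendsto_nhdsWithin_nhds]
  intro ρ hρ
  set I := ∫ z, (ω z) ^ 2 with hI_def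
  have hI0 : 0 ≤ I := integral_nonneg fun z => sq_nonneg _
  obtain ⟨r, hr, hVr⟩ := hUC (ρ / (4 * (I + 1))) (by positivity)
  obtain ⟨R, hR⟩ := htail (ρ / (2 * (C + 1))) (by positivity)
  refine ⟨min (r / (R + 1)) (δ / (R + 1)), by positivity, ?_⟩
  intro ε hε hεd
  have hεpos : 0 < ε := hε
  rw [Real.dist_eq, sub_zero, abs_of_pos hεpos] at hεd
  have hεR_r : ε * (R : ℝ) < r := by
    have h1 : ε < r / (R + 1) := lt_of_lt_of_le hεd (min_le_left _ _)
    have h2 : (0 : ℝ) < (R : ℝ) + 1 := by positivity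
    rw [lt_div_iff₀ h2] at h1
    nlinarith [hεpos]
  have hεR_δ : ε * (R : ℝ) < δ := by
    have h1 : ε < δ / (R + 1) := lt_of_lt_of_le hεd (min_le_right _ _)
    have h2 : (0 : ℝ) < (R : ℝ) + 1 := by positivity
    rw [lt_div_iff₀ h2] at h1
    nlinarith [hεpos]
  -- key bound per y
  have key : ∀ y : M, (∫ z, |V (ε • z + (y : E)) - V₀| * (η (ε * ‖z‖)) ^ 2 * (ω z) ^ 2)
      ≤ ρ / (4 * (I + 1)) * I + C * (ρ / (2 * (C + 1))) := by
    rintro ⟨y, hy⟩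
    simp only
    have hfi := hint ε hεpos y hy
    have hsplit := integral_add_compl
      (Metric.isClosed_closedBall.measurableSet :
        MeasurableSet (Metric.closedBall (0 : E) R)) hfi
    have h1 : (∫ z in Metric.closedBall (0 : E) R,
        |V (ε • z + y) - V₀| * (η (ε * ‖z‖)) ^ 2 * (ω z) ^ 2)
        ≤ ρ / (4 * (I + 1)) * I := by
      have hb : ∀ z ∈ Metric.closedBall (0 : E) R,
          |V (ε • z + y) - V₀| * (η (ε * ‖z‖)) ^ 2 * (ω z) ^ 2
          ≤ ρ / (4 * (I + 1)) * (ω z) ^ 2 := by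
        intro z hz
        have hzR : ‖z‖ ≤ R := by
          simpa [dist_eq_norm] using Metric.mem_closedBall.mp hz
        have hd : dist (ε • z + y) y = ε * ‖z‖ := by
          rw [dist_eq_norm]
          simp [norm_smul, abs_of_pos hεpos]
        have hεz : ε * ‖z‖ ≤ ε * (R : ℝ) := by
          exact mul_le_mul_of_nonneg_left hzR hεpos.le
        have hmem : ε • z + y ∈ K := by
          apply Metric.mem_cthickening_of_dist_le _ y δ M hy
          rw [hd]
          exact le_of_lt (lt_of_le_of_lt hεz hεR_δ)
        have hdist : dist (ε • z + y) y < r := by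
          rw [hd]; exact lt_of_le_of_lt hεz hεR_r
        have hVy := hVr _ hmem _ (hMK hy) hdist
        rw [Real.dist_eq, hVM y hy] at hVy
        have hη2 : (η (ε * ‖z‖)) ^ 2 ≤ 1 := by
          have h := hη_range (ε * ‖z‖)
          nlinarith [h.1, h.2]
        have hη2' : 0 ≤ (η (ε * ‖z‖)) ^ 2 := sq_nonneg _
        have hω2 : 0 ≤ (ω z) ^ 2 := sq_nonneg _
        have habs : 0 ≤ |V (ε • z + y) - V₀| := abs_nonneg _
        have h12 : |V (ε • z + y) - V₀| * (η (ε * ‖z‖)) ^ 2 ≤ ρ / (4 * (I + 1)) * 1 :=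
          mul_le_mul hVy.le hη2 hη2' (by positivity)
        calc |V (ε • z + y) - V₀| * (η (ε * ‖z‖)) ^ 2 * (ω z) ^ 2
            ≤ ρ / (4 * (I + 1)) * 1 * (ω z) ^ 2 := mul_le_mul_of_nonneg_right h12 hω2
          _ = ρ / (4 * (I + 1)) * (ω z) ^ 2 := by ring
      calc (∫ z in Metric.closedBall (0 : E) R,
            |V (ε • z + y) - V₀| * (η (ε * ‖z‖)) ^ 2 * (ω z) ^ 2)
          ≤ ∫ z in Metric.closedBall (0 : E) R, ρ / (4 * (I + 1)) * (ω z) ^ 2 := by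
            apply setIntegral_mono_on hfi.integrableOn
              ((hω_int.const_mul _).integrableOn)
              Metric.isClosed_closedBall.measurableSet hb
        _ = ρ / (4 * (I + 1)) * ∫ z in Metric.closedBall (0 : E) R, (ω z) ^ 2 := by
            rw [integral_const_mul]
        _ ≤ ρ / (4 * (I + 1)) * I := by
            apply mul_le_mul_of_nonneg_left _ (by positivity)
            exact setIntegral_le_integral hω_int
              (Filter.Eventually.of_forall fun z => sq_nonneg _)
    have h2 : (∫ z in (Metric.closedBall (0 : E) R)ᶜ,
        |V (ε • z + y) - V₀| * (η (ε * ‖z‖)) ^ 2 * (ω z) ^ 2)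
        ≤ C * (ρ / (2 * (C + 1))) := by
      calc (∫ z in (Metric.closedBall (0 : E) R)ᶜ,
            |V (ε • z + y) - V₀| * (η (ε * ‖z‖)) ^ 2 * (ω z) ^ 2)
          ≤ ∫ z in (Metric.closedBall (0 : E) R)ᶜ, C * (ω z) ^ 2 := by
            apply setIntegral_mono_on hfi.integrableOn
              ((hω_int.const_mul _).integrableOn)
              Metric.isClosed_closedBall.measurableSet.compl
              fun z _ => hbd ε hεpos y hy z
        _ = C * ∫ z in (Metric.closedBall (0 : E) R)ᶜ, (ω z) ^ 2 := by
            rw [integral_const_mul]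
        _ ≤ C * (ρ / (2 * (C + 1))) :=
            mul_le_mul_of_nonneg_left hR.le hC0
    linarith
  have hsup_le : (⨆ y : M, ∫ z, |V (ε • z + (y : E)) - V₀| * (η (ε * ‖z‖)) ^ 2 * (ω z) ^ 2)
      ≤ ρ / (4 * (I + 1)) * I + C * (ρ / (2 * (C + 1))) := ciSup_le key
  have hsup_nonneg : 0 ≤ ⨆ y : M,
      ∫ z, |V (ε • z + (y : E)) - V₀| * (η (ε * ‖z‖)) ^ 2 * (ω z) ^ 2 :=
    Real.iSup_nonneg fun y => integral_nonneg fun z => hnonneg ε y z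
  rw [Real.dist_eq, sub_zero, abs_of_nonneg hsup_nonneg]
  have e1 : ρ / (4 * (I + 1)) * I ≤ ρ / 4 := by
    rw [div_mul_eq_mul_div, div_le_div_iff₀ (by positivity) (by norm_num)]
    nlinarith
  have e2 : C * (ρ / (2 * (C + 1))) ≤ ρ / 2 := by
    rw [mul_div_assoc', div_le_div_iff₀ (by positivity) (by norm_num)]
    nlinarith
  calc (⨆ y : M, ∫ z, |V (ε • z + (y : E)) - V₀| * (η (ε * ‖z‖)) ^ 2 * (ω z) ^ 2)
      ≤ ρ / (4 * (I + 1)) * I + C * (ρ / (2 * (C + 1))) := hsup_le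
    _ ≤ ρ / 4 + ρ / 2 := add_le_add e1 e2
    _ < ρ := by linarith
end

section
/- Let A : ℝ² → ℝ² be continuous, let M ⊆ ℝ² be a nonempty compact set, let ω : ℝ² → ℝ be measurable with ω² Lebesgue-integrable, let δ > 0, and let η : ℝ → [0,1] be Borel measurable with η(t) = 0 for all t ≥ δ. Then sup_{y ∈ M} ∫_{ℝ²} ‖A(y) − A(εz + y)‖² · η(ε‖z‖)² · ω(z)² dz → 0 as ε → 0⁺. -/
open Real MeasureTheory Filter

/-- The magnetic-potential convergence claim of Lemma 5.2: if `A : ℝ² → ℝ²` is continuous,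
`M` is nonempty and compact, `ω²` is integrable, and `η : ℝ → [0,1]` vanishes on `[δ,∞)`,
then `sup_{y ∈ M} ∫ ‖A(y) − A(εz+y)‖² η(ε‖z‖)² ω(z)² dz → 0` as `ε → 0⁺`. -/
theorem stmt_11
    (A : EuclideanSpace ℝ (Fin 2) → EuclideanSpace ℝ (Fin 2)) (hA : Continuous A)
    (M : Set (EuclideanSpace ℝ (Fin 2))) (hM_ne : M.Nonempty) (hM_cpt : IsCompact M)
    (ω : EuclideanSpace ℝ (Fin 2) → ℝ) (hω_meas : Measurable ω)
    (hω_int : Integrable (fun x => (ω x) ^ 2))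
    (δ : ℝ) (hδ : 0 < δ)
    (η : ℝ → ℝ) (hη_meas : Measurable η)
    (hη_range : ∀ t, η t ∈ Set.Icc (0 : ℝ) 1)
    (hη_zero : ∀ t : ℝ, δ ≤ t → η t = 0) :
    Tendsto
      (fun ε : ℝ =>
        ⨆ y : M, ∫ z, ‖A (y : EuclideanSpace ℝ (Fin 2)) -
            A (ε • z + (y : EuclideanSpace ℝ (Fin 2)))‖ ^ 2 *
          (η (ε * ‖z‖)) ^ 2 * (ω z) ^ 2)
      (nhdsWithin 0 (Set.Ioi 0)) (nhds 0) := by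
  haveI : Nonempty M := hM_ne.to_subtype
  -- the compact neighborhood K of M
  set K : Set (EuclideanSpace ℝ (Fin 2)) := Metric.cthickening δ M with hK_def
  have hK_cpt : IsCompact K := by rw [hK_def]; exact hM_cpt.cthickening
  have hMK : M ⊆ K := Metric.self_subset_cthickening M
  -- bound on A over K
  obtain ⟨C, hC⟩ : ∃ C, ∀ x ∈ K, ‖A x‖ ≤ C :=
    hK_cpt.exists_bound_of_continuousOn hA.continuousOn
  set C' : ℝ := max C 0 with hC'_def
  have hC'_nonneg : 0 ≤ C' := le_max_right _ _
  have hC' : ∀ x ∈ K, ‖A x‖ ≤ C' := fun x hx => (hC x hx).trans (le_max_left _ _)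
  -- the sup function
  set S : (EuclideanSpace ℝ (Fin 2)) → ℝ := fun w => ⨆ y : M, ‖A (y : (EuclideanSpace ℝ (Fin 2))) - A (w + (y : (EuclideanSpace ℝ (Fin 2))))‖ ^ 2 with hS_def
  have hS_bdd : ∀ w : (EuclideanSpace ℝ (Fin 2)), BddAbove (Set.range fun y : M => ‖A (y : (EuclideanSpace ℝ (Fin 2))) - A (w + (y : (EuclideanSpace ℝ (Fin 2))))‖ ^ 2) := by
    intro w
    have hc : Continuous fun y : M => ‖A (y : (EuclideanSpace ℝ (Fin 2))) - A (w + (y : (EuclideanSpace ℝ (Fin 2))))‖ ^ 2 := by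
      fun_prop
    haveI : CompactSpace M := isCompact_iff_compactSpace.mp hM_cpt
    exact (isCompact_range hc).bddAbove
  have hS_nonneg : ∀ w, 0 ≤ S w := by
    intro w
    exact Real.iSup_nonneg fun y => by positivity
  have hS_le : ∀ w : (EuclideanSpace ℝ (Fin 2)), ∀ b : ℝ, (∀ y : M, ‖A (y : (EuclideanSpace ℝ (Fin 2))) - A (w + (y : (EuclideanSpace ℝ (Fin 2))))‖ ^ 2 ≤ b) → S w ≤ b :=
    fun w b hb => ciSup_le hb
  have hS_ge : ∀ (w : (EuclideanSpace ℝ (Fin 2))) (y : M), ‖A (y : (EuclideanSpace ℝ (Fin 2))) - A (w + (y : (EuclideanSpace ℝ (Fin 2))))‖ ^ 2 ≤ S w :=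
    fun w y => le_ciSup (hS_bdd w) y
  -- S is measurable (as a sup of continuous functions, it is lower semicontinuous)
  have hS_lsc : LowerSemicontinuous S := by
    apply lowerSemicontinuous_ciSup hS_bdd
    intro y
    exact (by fun_prop : Continuous fun w : (EuclideanSpace ℝ (Fin 2)) => ‖A (y : (EuclideanSpace ℝ (Fin 2))) - A (w + (y : (EuclideanSpace ℝ (Fin 2))))‖ ^ 2).lowerSemicontinuous
  have hS_meas : Measurable S := hS_lsc.measurable
  -- bound on S where the cutoff is nonzero
  have hS_bound : ∀ w : (EuclideanSpace ℝ (Fin 2)), ‖w‖ ≤ δ → S w ≤ 4 * C' ^ 2 := by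
    intro w hw
    apply hS_le
    intro y
    have hyK : (y : (EuclideanSpace ℝ (Fin 2))) ∈ K := hMK y.2
    have hwyK : w + (y : (EuclideanSpace ℝ (Fin 2))) ∈ K := by
      apply Metric.mem_cthickening_of_dist_le (w + (y : (EuclideanSpace ℝ (Fin 2)))) (y : (EuclideanSpace ℝ (Fin 2))) δ M y.2
      simpa [dist_eq_norm] using hw
    have h1 : ‖A (y : (EuclideanSpace ℝ (Fin 2))) - A (w + (y : (EuclideanSpace ℝ (Fin 2))))‖ ≤ 2 * C' := by
      calc ‖A (y : (EuclideanSpace ℝ (Fin 2))) - A (w + (y : (EuclideanSpace ℝ (Fin 2))))‖ ≤ ‖A (y : (EuclideanSpace ℝ (Fin 2)))‖ + ‖A (w + (y : (EuclideanSpace ℝ (Fin 2))))‖ := norm_sub_le _ _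
        _ ≤ C' + C' := add_le_add (hC' _ hyK) (hC' _ hwyK)
        _ = 2 * C' := by ring
    calc ‖A (y : (EuclideanSpace ℝ (Fin 2))) - A (w + (y : (EuclideanSpace ℝ (Fin 2))))‖ ^ 2 ≤ (2 * C') ^ 2 :=
          pow_le_pow_left₀ (norm_nonneg _) h1 2
      _ = 4 * C' ^ 2 := by ring
  -- S tends to 0 at 0 (uniform continuity of A on K)
  have hS_tendsto : ∀ ε' > (0 : ℝ), ∃ r > (0 : ℝ), ∀ w : (EuclideanSpace ℝ (Fin 2)), ‖w‖ < r → S w ≤ ε' := by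
    intro ε' hε'
    have huc : UniformContinuousOn A K := hK_cpt.uniformContinuousOn_of_continuous hA.continuousOn
    rw [Metric.uniformContinuousOn_iff] at huc
    obtain ⟨r, hr, hruc⟩ := huc (Real.sqrt ε') (Real.sqrt_pos.mpr hε')
    refine ⟨min r δ, lt_min hr hδ, ?_⟩
    intro w hw
    apply hS_le
    intro y
    have hyK : (y : (EuclideanSpace ℝ (Fin 2))) ∈ K := hMK y.2
    have hwyK : w + (y : (EuclideanSpace ℝ (Fin 2))) ∈ K := by
      apply Metric.mem_cthickening_of_dist_le (w + (y : (EuclideanSpace ℝ (Fin 2)))) (y : (EuclideanSpace ℝ (Fin 2))) δ M y.2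
      simp only [dist_eq_norm, add_sub_cancel_right]
      exact le_of_lt (lt_of_lt_of_le hw (min_le_right _ _))
    have hdist : dist (y : (EuclideanSpace ℝ (Fin 2))) (w + (y : (EuclideanSpace ℝ (Fin 2)))) < r := by
      simp only [dist_eq_norm]
      have : (y : (EuclideanSpace ℝ (Fin 2))) - (w + (y : (EuclideanSpace ℝ (Fin 2)))) = -w := by abel
      rw [this, norm_neg]
      exact lt_of_lt_of_le hw (min_le_left _ _)
    have := hruc (y : (EuclideanSpace ℝ (Fin 2))) hyK (w + (y : (EuclideanSpace ℝ (Fin 2)))) hwyK hdist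
    rw [dist_eq_norm] at this
    calc ‖A (y : (EuclideanSpace ℝ (Fin 2))) - A (w + (y : (EuclideanSpace ℝ (Fin 2))))‖ ^ 2 ≤ (Real.sqrt ε') ^ 2 :=
          pow_le_pow_left₀ (norm_nonneg _) this.le 2
      _ = ε' := Real.sq_sqrt hε'.le
  -- dominating function for the integrands
  set h : ℝ → (EuclideanSpace ℝ (Fin 2)) → ℝ := fun ε z => S (ε • z) * (η (ε * ‖z‖)) ^ 2 * (ω z) ^ 2 with hh_def
  have hh_meas : ∀ ε : ℝ, Measurable (h ε) := by
    intro ε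
    apply Measurable.mul
    apply Measurable.mul
    · exact hS_meas.comp (measurable_id.const_smul ε)
    · exact (hη_meas.comp (measurable_norm.const_mul ε)).pow_const 2
    · exact hω_meas.pow_const 2
  have hη_sq_le_one : ∀ t, (η t) ^ 2 ≤ 1 := by
    intro t
    have h1 := (hη_range t).1
    have h2 := (hη_range t).2
    nlinarith
  have hη_sq_nonneg : ∀ t, (0 : ℝ) ≤ (η t) ^ 2 := fun t => sq_nonneg _
  have hh_nonneg : ∀ ε z, 0 ≤ h ε z := by
    intro ε z
    have := hS_nonneg (ε • z)
    positivity
  -- h ε z ≤ 4 C'^2 ω z ^2 for ε > 0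
  have hh_bound : ∀ ε : ℝ, 0 < ε → ∀ z, h ε z ≤ 4 * C' ^ 2 * (ω z) ^ 2 := by
    intro ε hε z
    by_cases hcase : δ ≤ ε * ‖z‖
    · rw [hh_def]
      simp only [hη_zero _ hcase]
      have : (0:ℝ) ^ 2 = 0 := by norm_num
      rw [this, mul_zero, zero_mul]
      positivity
    · push_neg at hcase
      have hnorm : ‖ε • z‖ ≤ δ := by
        rw [norm_smul, Real.norm_eq_abs, abs_of_pos hε]
        exact hcase.le
      have hSb := hS_bound (ε • z) hnorm
      calc h ε z ≤ (4 * C' ^ 2) * 1 * (ω z) ^ 2 := by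
            apply mul_le_mul_of_nonneg_right _ (sq_nonneg _)
            exact mul_le_mul hSb (hη_sq_le_one _) (hη_sq_nonneg _) (by positivity)
        _ = 4 * C' ^ 2 * (ω z) ^ 2 := by ring
  -- integrability of h ε for each ε
  have hg_int : Integrable (fun z => 4 * C' ^ 2 * (ω z) ^ 2) := hω_int.const_mul _
  have hh_int : ∀ ε : ℝ, 0 < ε → Integrable (h ε) := by
    intro ε hε
    apply hg_int.mono' (hh_meas ε).aestronglyMeasurable
    filter_upwards with z
    rw [Real.norm_of_nonneg (hh_nonneg ε z)]
    exact hh_bound ε hε z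
  -- pointwise convergence of h ε z to 0 as ε → 0⁺
  have hh_lim : ∀ z, Tendsto (fun ε => h ε z) (nhdsWithin 0 (Set.Ioi 0)) (nhds 0) := by
    intro z
    have hlim : Tendsto (fun ε : ℝ => S (ε • z)) (nhdsWithin 0 (Set.Ioi 0)) (nhds 0) := by
      rw [Metric.tendsto_nhdsWithin_nhds]
      intro ε' hε'
      obtain ⟨r, hr, hrS⟩ := hS_tendsto (ε' / 2) (by linarith)
      refine ⟨r / (‖z‖ + 1), by positivity, ?_⟩
      intro ε hε hdist
      have hεpos : (0:ℝ) < ε := hε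
      rw [Real.dist_eq, sub_zero, abs_of_pos hεpos] at hdist
      have hz1 : (0:ℝ) < ‖z‖ + 1 := by positivity
      have hnorm : ‖ε • z‖ < r := by
        rw [norm_smul, Real.norm_eq_abs, abs_of_pos hεpos]
        calc ε * ‖z‖ ≤ ε * (‖z‖ + 1) := by nlinarith [norm_nonneg z, hεpos]
          _ < r / (‖z‖ + 1) * (‖z‖ + 1) := by
              exact mul_lt_mul_of_pos_right hdist hz1
          _ = r := by field_simp
      rw [Real.dist_eq, sub_zero, abs_of_nonneg (hS_nonneg _)]
      exact lt_of_le_of_lt (hrS _ hnorm) (by linarith)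
    have hub : ∀ ε : ℝ, h ε z ≤ S (ε • z) * (ω z) ^ 2 := by
      intro ε
      rw [hh_def]
      apply mul_le_mul_of_nonneg_right _ (sq_nonneg _)
      calc S (ε • z) * (η (ε * ‖z‖)) ^ 2 ≤ S (ε • z) * 1 :=
            mul_le_mul_of_nonneg_left (hη_sq_le_one _) (hS_nonneg _)
        _ = S (ε • z) := mul_one _
    have hprod : Tendsto (fun ε : ℝ => S (ε • z) * (ω z) ^ 2)
        (nhdsWithin 0 (Set.Ioi 0)) (nhds 0) := by
      have := hlim.mul_const ((ω z) ^ 2)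
      simpa using this
    exact squeeze_zero (fun ε => hh_nonneg ε z) hub hprod
  -- the integral of h ε tends to 0 by dominated convergence
  have hint_lim : Tendsto (fun ε : ℝ => ∫ z, h ε z) (nhdsWithin 0 (Set.Ioi 0)) (nhds 0) := by
    have := MeasureTheory.tendsto_integral_filter_of_dominated_convergence
      (μ := (volume : Measure (EuclideanSpace ℝ (Fin 2)))) (l := nhdsWithin (0:ℝ) (Set.Ioi 0))
      (F := h) (f := fun _ => (0:ℝ)) (bound := fun z => 4 * C' ^ 2 * (ω z) ^ 2)
      (Eventually.of_forall fun ε => (hh_meas ε).aestronglyMeasurable)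
      (by
        filter_upwards [self_mem_nhdsWithin] with ε hε
        filter_upwards with z
        rw [Real.norm_of_nonneg (hh_nonneg ε z)]
        exact hh_bound ε hε z)
      hg_int
      (Eventually.of_forall fun z => hh_lim z)
    simpa using this
  -- finish by squeezing
  apply squeeze_zero'
  · filter_upwards [self_mem_nhdsWithin] with ε hε
    apply Real.iSup_nonneg
    intro y
    apply integral_nonneg
    intro z
    positivity
  · filter_upwards [self_mem_nhdsWithin] with ε hε
    apply ciSup_le
    intro y
    apply integral_mono_of_nonneg
    · filter_upwards with z
      positivity
    · exact hh_int ε hε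
    · filter_upwards with z
      apply mul_le_mul_of_nonneg_right _ (sq_nonneg _)
      exact mul_le_mul_of_nonneg_right (hS_ge (ε • z) y) (hη_sq_nonneg _)
  · exact hint_lim
end
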